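/- Let G = Z₂ × Z₄ and θ a normalized orthomorphism of G. If A₂₂ = {x} (the unique element of order 2 mapped by θ to an element of order 2), then θ(A₄₂) = {x, x·θ(x)} and A₂₄ = {θ(x), x·θ(x)}. -/

import Mathlib

/-- The group `ℤ₂ × ℤ₄` (written additively). -/
abbrev G24 : Type := ZMod 2 × ZMod 4

/-- A normalized orthomorphism: a bijection fixing the identity whose associated
complete mapping `x ↦ -x + θ x` (i.e. `x⁻¹θ(x)` in additive notation) is a bijection. -/
def IsNormOrtho (θ : G24 → G24) : Prop :=
  Function.Bijective θ ∧ θ 0 = 0 ∧ Function.Bijective (fun x => -x + θ x)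

/-- Orthogonality of orthomorphisms: `x ↦ θ₁(x)⁻¹θ₂(x)` is a bijection. -/
def Orthogonal (θ₁ θ₂ : G24 → G24) : Prop :=
  Function.Bijective (fun x => -θ₁ x + θ₂ x)

/-- `A i j θ = {x : order of x is i and order of θ(x) is j}`. -/
def A (i j : ℕ) (θ : G24 → G24) : Set G24 :=
  {x | addOrderOf x = i ∧ addOrderOf (θ x) = j}

/-!
The involutions of `ℤ₂ × ℤ₄` together with `0` form a Klein four-group, and `θ x ≠ x`, so the
involutions are exactly `x`, `θ x` and `x + θ x`. Every order divides `4` and `θ` fixes only `0`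
among the elements of order `1`; as `x` is the only involution with involutive image, `θ` maps the
involutions other than `x` to elements of order `4`, and maps the elements of order `4` with
involutive image onto the involutions other than `θ x`.
-/

namespace G24

lemma two_pow_two_nsmul_eq_zero : ∀ y : G24, 2 ^ 2 • y = 0 := by decide

lemma addOrderOf_eq_two_iff {y : G24} : addOrderOf y = 2 ↔ y + y = 0 ∧ y ≠ 0 := by
  rw [addOrderOf_eq_prime_iff, two_nsmul]

lemma addOrderOf_eq_four_iff {y : G24} : addOrderOf y = 4 ↔ y ≠ 0 ∧ addOrderOf y ≠ 2 := by
  constructor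
  · intro hy
    refine ⟨?_, by omega⟩
    rintro rfl
    simp at hy
  · rintro ⟨hy0, hy2⟩
    have hdvd : addOrderOf y ∣ 2 ^ 2 :=
      addOrderOf_dvd_of_nsmul_eq_zero (two_pow_two_nsmul_eq_zero y)
    obtain ⟨i, hi, hy⟩ := (Nat.dvd_prime_pow Nat.prime_two).1 hdvd
    interval_cases i <;> simp_all

lemma addOrderOf_eq_two_iff_eq_or_eq_or_eq_add {y z t : G24} (hy : addOrderOf y = 2)
    (hz : addOrderOf z = 2) (hyz : y ≠ z) :
    addOrderOf t = 2 ↔ t = y ∨ t = z ∨ t = y + z := by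
  simp only [addOrderOf_eq_two_iff] at *
  have klein : ∀ y z t : G24, y + y = 0 ∧ y ≠ 0 → z + z = 0 ∧ z ≠ 0 → y ≠ z →
      (t + t = 0 ∧ t ≠ 0 ↔ t = y ∨ t = z ∨ t = y + z) := by
    decide
  exact klein y z t hy hz hyz

end G24

lemma eq_of_A22_eq_singleton {θ : G24 → G24} {x y : G24} (hx : A 2 2 θ = {x})
    (hy : addOrderOf y = 2) (hθy : addOrderOf (θ y) = 2) : y = x :=
  (Set.ext_iff.1 hx y).1 ⟨hy, hθy⟩

namespace IsNormOrtho

variable {θ : G24 → G24}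

lemma apply_eq_zero_iff (hθ : IsNormOrtho θ) {y : G24} : θ y = 0 ↔ y = 0 :=
  hθ.1.1.eq_iff' hθ.2.1

lemma apply_ne_self (hθ : IsNormOrtho θ) {y : G24} (hy : y ≠ 0) : θ y ≠ y := by
  intro h
  apply hy
  apply hθ.2.2.1
  simp only [h, hθ.2.1, neg_add_cancel, neg_zero, add_zero]

section UniqueA22

variable {x : G24}

lemma image_A42_eq (hθ : IsNormOrtho θ) (hx : A 2 2 θ = {x}) :
    θ '' A 4 2 θ = {t | addOrderOf t = 2} \ {θ x} := by
  obtain ⟨hx2, -⟩ : x ∈ A 2 2 θ := hx ▸ rfl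
  ext t
  constructor
  · rintro ⟨y, ⟨hy4, hθy2⟩, rfl⟩
    refine ⟨hθy2, fun hyx => ?_⟩
    rw [hθ.1.1 hyx, hx2] at hy4
    omega
  · rintro ⟨ht2, htx⟩
    obtain ⟨y, rfl⟩ := hθ.1.2 t
    refine ⟨y, ⟨G24.addOrderOf_eq_four_iff.2 ⟨fun hy0 => ?_, fun hy2 => ?_⟩, ht2⟩, rfl⟩
    · simp [hy0, hθ.2.1] at ht2
    · exact htx (congrArg θ (eq_of_A22_eq_singleton hx hy2 ht2))

lemma A24_eq (hθ : IsNormOrtho θ) (hx : A 2 2 θ = {x}) :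
    A 2 4 θ = {t | addOrderOf t = 2} \ {x} := by
  obtain ⟨-, hθx2⟩ : x ∈ A 2 2 θ := hx ▸ rfl
  ext y
  constructor
  · rintro ⟨hy2, hθy4⟩
    refine ⟨hy2, fun hyx => ?_⟩
    rw [Set.mem_singleton_iff.1 hyx, hθx2] at hθy4
    omega
  · rintro ⟨hy2, hyx⟩
    refine ⟨hy2, G24.addOrderOf_eq_four_iff.2 ⟨?_, fun hθy2 => hyx ?_⟩⟩
    · exact hθ.apply_eq_zero_iff.not.2 (G24.addOrderOf_eq_two_iff.1 hy2).2
    · exact eq_of_A22_eq_singleton hx hy2 hθy2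

end UniqueA22

end IsNormOrtho

theorem image_A42_and_A24 (θ : G24 → G24) (hθ : IsNormOrtho θ) (x : G24)
    (hx : A 2 2 θ = {x}) :
    θ '' A 4 2 θ = {x, x + θ x} ∧ A 2 4 θ = {θ x, x + θ x} := by
  obtain ⟨hx2, hθx2⟩ : x ∈ A 2 2 θ := hx ▸ rfl
  have hx0 : x ≠ 0 := (G24.addOrderOf_eq_two_iff.1 hx2).2
  have hθx0 : θ x ≠ 0 := (G24.addOrderOf_eq_two_iff.1 hθx2).2
  have hxθx : x ≠ θ x := (hθ.apply_ne_self hx0).symm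
  have hinv (t : G24) := G24.addOrderOf_eq_two_iff_eq_or_eq_or_eq_add (t := t) hx2 hθx2 hxθx
  have hsum_ne_x : x + θ x ≠ x := by simpa using hθx0
  have hsum_ne_θx : x + θ x ≠ θ x := by simpa using hx0
  rw [hθ.image_A42_eq hx, hθ.A24_eq hx]
  constructor <;> ext t <;>
    simp only [Set.mem_sdiff, Set.mem_ofPred_eq, hinv, Set.mem_insert_iff,
      Set.mem_singleton_iff] <;>
    grind
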